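/- Let K be a closed real subspace of a complex Hilbert space H. Then K ∩ iK = {0} if and only if K' + iK' is dense in H, where K' is the symplectic complement of K. -/

import Mathlib

/-!
Regard `H` as a real Hilbert space with `⟪x, y⟫_ℝ = Re ⟪x, y⟫`. Since `Re ⟪i x, y⟫ = Im ⟪x, y⟫`,
the symplectic complement `K'` is the real orthogonal complement of `iK`, and because
multiplication by `i` is a real isometry, `iK' = Kᗮ`. Thus `K' + iK' = (iK)ᗮ + Kᗮ`, whose
orthogonal complement is `iK ∩ K` (both are closed); a subspace is dense exactly when its
orthogonal complement is trivial.
-/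

/-- The symplectic complement of a set `K` in a complex Hilbert space:
`K' = {y : Im⟨y,x⟩ = 0 for all x ∈ K}`. -/
def sympCompl {H : Type*} [NormedAddCommGroup H] [InnerProductSpace ℂ H]
    (K : Set H) : Set H :=
  {y : H | ∀ x ∈ K, (inner ℂ y x : ℂ).im = 0}

open Complex Pointwise

namespace Submodule

theorem coe_sup_pointwise_smul {α R M : Type*} [Monoid α] [Semiring R] [AddCommMonoid M]
    [Module R M] [DistribMulAction α M] [SMulCommClass α R M] (W : Submodule R M) (c : α) :
    ((W ⊔ c • W : Submodule R M) : Set M) = {x | ∃ ψ ∈ W, ∃ φ ∈ W, x = ψ + c • φ} := by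
  ext x
  simp only [SetLike.mem_coe, mem_sup, mem_smul_pointwise_iff_exists, Set.mem_ofPred_eq]
  grind

theorem dense_orthogonal_sup_orthogonal_iff {𝕜 E : Type*} [RCLike 𝕜] [NormedAddCommGroup E]
    [InnerProductSpace 𝕜 E] [CompleteSpace E] {U V : Submodule 𝕜 E}
    (hU : IsClosed (U : Set E)) (hV : IsClosed (V : Set E)) :
    Dense ((Uᗮ ⊔ Vᗮ : Submodule 𝕜 E) : Set E) ↔ U ⊓ V = ⊥ := by
  rw [dense_iff_topologicalClosure_eq_top, topologicalClosure_eq_top_iff, ← inf_orthogonal,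
    orthogonal_orthogonal_eq_closure, orthogonal_orthogonal_eq_closure,
    hU.submodule_topologicalClosure_eq, hV.submodule_topologicalClosure_eq]

end Submodule

section RealStructure

variable {H : Type*} [NormedAddCommGroup H] [InnerProductSpace ℂ H]

attribute [local instance] InnerProductSpace.complexToReal

theorem real_inner_I_smul_left (x y : H) : inner ℝ (I • x) y = (inner ℂ x y).im := by
  simp [real_inner_eq_re_inner ℂ, inner_smul_left]

theorem real_inner_I_smul_I_smul (x y : H) : inner ℝ (I • x) (I • y) = inner ℝ x y := by
  simp [real_inner_eq_re_inner ℂ, inner_smul_left, inner_smul_right]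

theorem mem_I_smul_iff {K : Submodule ℝ H} {x : H} : x ∈ I • K ↔ -I • x ∈ K := by
  rw [← SetLike.mem_coe, Submodule.coe_pointwise_smul,
    Set.mem_smul_set_iff_inv_smul_mem₀ I_ne_zero, inv_I, SetLike.mem_coe]

theorem isClosed_I_smul {K : Submodule ℝ H} (hK : IsClosed (K : Set H)) :
    IsClosed ((I • K : Submodule ℝ H) : Set H) := by
  rw [Submodule.coe_pointwise_smul]
  exact hK.smul_of_ne_zero I_ne_zero

theorem sympCompl_eq_orthogonal_I_smul (K : Submodule ℝ H) :
    sympCompl (K : Set H) = ((I • K)ᗮ : Set H) := by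
  ext y
  simp only [sympCompl, Set.mem_ofPred_eq, SetLike.mem_coe, Submodule.mem_orthogonal,
    Submodule.mem_smul_pointwise_iff_exists, forall_exists_index, and_imp,
    forall_apply_eq_imp_iff₂, real_inner_I_smul_left, ← inner_conj_symm y, conj_im, neg_eq_zero]

theorem I_smul_orthogonal_I_smul (K : Submodule ℝ H) : I • (I • K)ᗮ = Kᗮ := by
  ext y
  rw [mem_I_smul_iff]
  simp only [Submodule.mem_orthogonal, Submodule.mem_smul_pointwise_iff_exists,
    forall_exists_index, and_imp, forall_apply_eq_imp_iff₂, neg_smul, inner_neg_right,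
    real_inner_I_smul_I_smul, neg_eq_zero]

theorem I_smul_inf_eq_bot_iff (K : Submodule ℝ H) :
    I • K ⊓ K = ⊥ ↔ ∀ x ∈ K, ∀ y ∈ K, x = I • y → x = 0 := by
  simp only [Submodule.eq_bot_iff, Submodule.mem_inf, Submodule.mem_smul_pointwise_iff_exists]
  grind

end RealStructure

/-- For a closed real subspace `K` of a complex Hilbert space,
`K ∩ iK = {0}` if and only if `K' + iK'` is dense in `H`. -/
theorem inter_trivial_iff_sympCompl_sum_dense
    {H : Type*} [NormedAddCommGroup H] [InnerProductSpace ℂ H] [CompleteSpace H]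
    (K : Submodule ℝ H) (hcl : IsClosed (K : Set H)) :
    (∀ x ∈ (K : Set H), ∀ y ∈ (K : Set H), x = Complex.I • y → x = 0)
      ↔ Dense {x : H | ∃ ψ ∈ sympCompl (K : Set H), ∃ φ ∈ sympCompl (K : Set H),
          x = ψ + Complex.I • φ} := by
  let := InnerProductSpace.complexToReal (G := H)
  simp only [sympCompl_eq_orthogonal_I_smul, SetLike.mem_coe]
  rw [← Submodule.coe_sup_pointwise_smul, I_smul_orthogonal_I_smul,
    Submodule.dense_orthogonal_sup_orthogonal_iff (isClosed_I_smul hcl) hcl,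
    I_smul_inf_eq_bot_iff]
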